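/- The ℚ-algebra homomorphism φ : ℚ[c₁,c₂,ξ,η] → ℚ[A,B,C] determined by c₁ ↦ A+B, c₂ ↦ AB, ξ ↦ C+B−A, η ↦ C is surjective, and its kernel is the principal ideal generated by c₁² − 4c₂ − (ξ−η)²; hence φ induces a ℚ-algebra isomorphism ℚ[c₁,c₂,ξ,η]/(c₁² − 4c₂ − (ξ−η)²) ≅ ℚ[A,B,C]. -/

import Mathlib

/-!
Under `φ` the class `ξ - η` goes to `B - A` and `c₁² - 4c₂` to `(A - B)²`, so the relation
`c₁² - 4c₂ - (ξ - η)²` lies in the kernel. Solving `A + B = c₁`, `B - A = ξ - η`, `C = η` for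
`A, B, C` gives an algebra section `σ` of `φ`, and `σ ∘ φ` fixes `c₁, ξ, η` and moves `c₂` only by
a multiple of the relation. Hence every element of the kernel is congruent to `0` modulo the
relation, and the first isomorphism theorem gives the isomorphism.
-/

open MvPolynomial

namespace Stmt6

/-- The `ℚ`-algebra homomorphism `φ : ℚ[c₁,c₂,ξ,η] → ℚ[A,B,C]` with
`c₁ ↦ A+B`, `c₂ ↦ AB`, `ξ ↦ C+B−A`, `η ↦ C`, where `c₁,c₂,ξ,η` are `X 0, X 1, X 2, X 3`
and `A,B,C` are `X 0, X 1, X 2`. -/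
noncomputable abbrev φ : MvPolynomial (Fin 4) ℚ →ₐ[ℚ] MvPolynomial (Fin 3) ℚ :=
  aeval ![X 0 + X 1, X 0 * X 1, X 2 + X 1 - X 0, X 2]

theorem _root_.RingHom.ker_eq_of_mk_comp_eq {R A B : Type*} [CommSemiring R] [CommRing A]
    [Semiring B] [Algebra R A] [Algebra R B] {f : A →ₐ[R] B} {g : B →ₐ[R] A} {I : Ideal A}
    (hI : I ≤ RingHom.ker f)
    (hgf : (Ideal.Quotient.mkₐ R I).comp (g.comp f) = Ideal.Quotient.mkₐ R I) :
    RingHom.ker f = I := by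
  refine le_antisymm (fun a ha => ?_) hI
  have h := AlgHom.congr_fun hgf a
  rw [RingHom.mem_ker] at ha
  rw [AlgHom.comp_apply, AlgHom.comp_apply, ha, map_zero, map_zero, Ideal.Quotient.mkₐ_eq_mk,
    eq_comm, Ideal.Quotient.eq_zero_iff_mem] at h
  exact h

noncomputable abbrev relation : MvPolynomial (Fin 4) ℚ := X 0 ^ 2 - 4 * X 1 - (X 2 - X 3) ^ 2

noncomputable abbrev σ : MvPolynomial (Fin 3) ℚ →ₐ[ℚ] MvPolynomial (Fin 4) ℚ :=
  aeval ![(1 / 2 : ℚ) • (X 0 - (X 2 - X 3)), (1 / 2 : ℚ) • (X 0 + (X 2 - X 3)), X 3]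

theorem φ_comp_σ : φ.comp σ = AlgHom.id ℚ _ := by
  ext i : 1
  refine MvPolynomial.funext fun x => ?_
  fin_cases i <;>
    simp only [AlgHom.comp_apply, AlgHom.id_apply, aeval_X, Fin.zero_eta, Fin.mk_one,
      Fin.reduceFinMk, Matrix.cons_val_zero, Matrix.cons_val_one, Matrix.cons_val, map_add,
      map_sub, map_smul, smul_eval, eval_X] <;>
    ring

theorem φ_relation : φ relation = 0 := by
  refine MvPolynomial.funext fun x => ?_
  simp only [aeval_X, Matrix.cons_val_zero, Matrix.cons_val_one, Matrix.cons_val, map_add,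
    map_sub, map_mul, map_pow, map_ofNat, map_zero, eval_X]
  ring

theorem mk_comp_σ_comp_φ :
    (Ideal.Quotient.mkₐ ℚ (Ideal.span {relation})).comp (σ.comp φ)
      = Ideal.Quotient.mkₐ ℚ (Ideal.span {relation}) := by
  ext i : 1
  simp only [AlgHom.comp_apply, Ideal.Quotient.mkₐ_eq_mk, Ideal.Quotient.eq,
    Ideal.mem_span_singleton']
  -- `σ (φ c₂) = σ (A * B) = (c₁² - (ξ - η)²) / 4 = c₂ + relation / 4`
  refine ⟨C (![0, 1 / 4, 0, 0] i), MvPolynomial.funext fun x => ?_⟩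
  fin_cases i <;>
  · simp only [aeval_X, Fin.zero_eta, Fin.mk_one, Fin.reduceFinMk, Matrix.cons_val_zero,
      Matrix.cons_val_one, Matrix.cons_val, map_add, map_sub, map_mul, map_pow, map_ofNat,
      smul_eval, eval_C, eval_X]
    ring

/-- The homomorphism `φ` is surjective, its kernel is the principal ideal generated by
`c₁² − 4c₂ − (ξ−η)²`, and hence `φ` induces a `ℚ`-algebra isomorphism
`ℚ[c₁,c₂,ξ,η]/(c₁² − 4c₂ − (ξ−η)²) ≅ ℚ[A,B,C]`. -/
theorem surjective_ker_and_iso :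
    Function.Surjective φ ∧
    RingHom.ker φ = Ideal.span {(X 0 ^ 2 - 4 * X 1 - (X 2 - X 3) ^ 2 : MvPolynomial (Fin 4) ℚ)} ∧
    ∃ e : (MvPolynomial (Fin 4) ℚ ⧸
        Ideal.span {(X 0 ^ 2 - 4 * X 1 - (X 2 - X 3) ^ 2 : MvPolynomial (Fin 4) ℚ)})
        ≃ₐ[ℚ] MvPolynomial (Fin 3) ℚ,
      ∀ p : MvPolynomial (Fin 4) ℚ,
        e (Ideal.Quotient.mk
          (Ideal.span {(X 0 ^ 2 - 4 * X 1 - (X 2 - X 3) ^ 2 : MvPolynomial (Fin 4) ℚ)}) p)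
          = φ p := by
  have hsurj : Function.Surjective φ := fun q => ⟨σ q, AlgHom.congr_fun φ_comp_σ q⟩
  have hker : RingHom.ker φ = Ideal.span {relation} :=
    RingHom.ker_eq_of_mk_comp_eq (Ideal.span_singleton_le_iff_mem _ |>.2 φ_relation)
      mk_comp_σ_comp_φ
  refine ⟨hsurj, hker, ?_⟩
  rw [← hker]
  exact ⟨Ideal.quotientKerAlgEquivOfSurjective hsurj, fun p => rfl⟩

end Stmt6
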